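/- arXiv:1308.0674 — 2 statements merged into one kernel-verified Lean document; each statement's English description precedes it below -/
import Mathlib

section
/- A nil subalgebra of a finite-dimensional associative algebra over a field is nilpotent: if A is a finite-dimensional associative algebra over a field k and B ⊆ A is a (not necessarily unital) subalgebra all of whose elements are nilpotent, then there exists n such that every product of n elements of B is zero. -/
/-!
The powers `B, B², B³, …` of the subspace `B` form a descending chain of subspaces of the
finite-dimensional space `A`, so they stabilise at some `C` with `C * C = C`. A Nakayama-type
argument shows that such a `C` vanishes when all its elements are nilpotent: a minimal nonzero
subspace `W` with `C * W = W` would contain some `w` with `W = C * span {w}`, so `w = c * w` for a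
nilpotent `c ∈ C`, forcing `w = 0` because `1 - c` is a unit.
-/

open Submodule

namespace Submodule

variable {R A : Type*} [CommRing R] [Ring A] [Algebra R A]

theorem antitone_pow_succ {S : Submodule R A} (hS : S * S ≤ S) :
    Antitone fun n : ℕ => S ^ (n + 1) :=
  antitone_nat_of_succ_le fun n =>
    calc S ^ (n + 1 + 1) = S ^ n * (S * S) := by rw [pow_succ, pow_succ, mul_assoc]
      _ ≤ S ^ n * S := mul_le_mul_right hS _

theorem eq_bot_of_mul_eq_self_of_isNilpotent [IsArtinian R A] {C W : Submodule R A}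
    (hnil : ∀ c ∈ C, IsNilpotent c) (hCC : C * C = C) (hW : C * W = W) : W = ⊥ := by
  induction W using WellFoundedLT.induction with
  | ind W ih =>
  suffices hann : ∀ w ∈ W, C * span R {w} = ⊥ by
    rw [← hW, eq_bot_iff, mul_le]
    intro c hc w hw
    simpa [hann w hw] using mul_mem_mul hc (mem_span_singleton_self w)
  intro w hw
  have hle : C * span R {w} ≤ W := hW ▸ mul_le_mul_right ((span_singleton_le_iff_mem w W).2 hw) C
  rcases hle.lt_or_eq with hlt | heq
  · exact ih _ hlt (by rw [← mul_assoc, hCC])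
  · obtain ⟨c, hc, hcw⟩ := mem_mul_span_singleton.mp (heq ▸ hw)
    have hw0 : w = 0 :=
      (hnil c hc).isUnit_one_sub.mul_right_eq_zero.mp (by rw [sub_mul, one_mul, hcw, sub_self])
    rw [hw0, span_zero_singleton, mul_bot]

end Submodule

theorem NonUnitalSubalgebra.exists_toSubmodule_pow_eq_bot {R A : Type*} [CommRing R] [Ring A]
    [Algebra R A] [IsArtinian R A] (B : NonUnitalSubalgebra R A)
    (hnil : ∀ b ∈ B, IsNilpotent b) : ∃ n, B.toSubmodule ^ (n + 1) = ⊥ := by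
  set S := B.toSubmodule
  have hanti := antitone_pow_succ (S := S) (mul_le.2 fun a ha b hb => B.mul_mem ha hb)
  obtain ⟨N, hN⟩ := IsArtinian.monotone_stabilizes ⟨_, hanti.dual_right⟩
  have hCC : S ^ (N + 1) * S ^ (N + 1) = S ^ (N + 1) := by
    rw [← pow_add, show N + 1 + (N + 1) = 2 * N + 1 + 1 by ring]
    exact (hN (2 * N + 1) (by omega)).symm
  have hCS : S ^ (N + 1) ≤ S := by simpa using hanti (Nat.zero_le N)
  exact ⟨N, eq_bot_of_mul_eq_self_of_isNilpotent (fun c hc => hnil c (hCS hc)) hCC hCC⟩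

/-- Wedderburn: a nil subalgebra of a finite-dimensional associative algebra over a
field is nilpotent — some fixed-length products of its elements all vanish. -/
theorem nil_subalgebra_is_nilpotent (k : Type*) [Field k] (A : Type*) [Ring A]
    [Algebra k A] [FiniteDimensional k A] (B : NonUnitalSubalgebra k A)
    (hnil : ∀ b ∈ B, IsNilpotent b) :
    ∃ n : ℕ, 0 < n ∧ ∀ f : Fin n → A, (∀ i, f i ∈ B) → (List.ofFn f).prod = 0 := by
  obtain ⟨n, hn⟩ := B.exists_toSubmodule_pow_eq_bot hnil
  refine ⟨n + 1, n.succ_pos, fun f hf => ?_⟩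
  have hprod : (List.ofFn f).prod ∈ B.toSubmodule ^ (n + 1) :=
    pow_subset_pow (M := B.toSubmodule) (Set.mem_pow.mpr ⟨fun i => ⟨f i, hf i⟩, rfl⟩)
  rwa [hn, mem_bot] at hprod
end

section
/- Shestakov's example of a nilpotent but not strongly nilpotent ideal: let A be the nonassociative algebra over a field F with basis {a, b, z} and multiplication determined by a·a = b, b·z = a, and all other products of basis elements equal to zero. Then the subspace I = Fa + Fb is an ideal of A which is nilpotent as a subalgebra (every product of 3 elements of I, under any bracketing, is zero), yet I is not strongly nilpotent as an ideal: for every n there is a nonzero product of elements of A containing at least n factors from I; in particular b = ((a·(b·z))·z)·a ≠ 0. -/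
/-- Shestakov's three-dimensional algebra with basis a, b, z and multiplication
determined by a·a = b, b·z = a, all other products of basis elements zero. -/
structure ShAlg (F : Type*) where
  c : Fin 3 → F

namespace ShAlg

variable {F : Type*} [Field F]

instance : Zero (ShAlg F) := ⟨⟨0⟩⟩
instance : Add (ShAlg F) := ⟨fun x y => ⟨x.c + y.c⟩⟩
instance : SMul F (ShAlg F) := ⟨fun t x => ⟨t • x.c⟩⟩
/-- The bilinear multiplication determined by a·a = b, b·z = a, other basis
products zero (coordinates: 0 ↔ a, 1 ↔ b, 2 ↔ z). -/
instance : Mul (ShAlg F) := ⟨fun x y => ⟨![x.c 1 * y.c 2, x.c 0 * y.c 0, 0]⟩⟩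

def a : ShAlg F := ⟨![1, 0, 0]⟩
def b : ShAlg F := ⟨![0, 1, 0]⟩
def z : ShAlg F := ⟨![0, 0, 1]⟩

/-- Evaluation of a formal (nonassociative) bracketed product of elements of the
algebra. -/
noncomputable def ev : FreeMagma (ShAlg F) → ShAlg F :=
  FreeMagma.lift (id : ShAlg F → ShAlg F)

open Classical in
/-- The number of factors of a formal bracketed product lying in a given set. -/
noncomputable def countIn (I : Set (ShAlg F)) : FreeMagma (ShAlg F) → ℕ
  | FreeMagma.of x => if x ∈ I then 1 else 0
  | FreeMagma.mul x y => countIn I x + countIn I y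

end ShAlg

/-! Every product lies in `I = Fa + Fb`. Only `b·z` produces an `a`, so a product whose right
factor lies in `I` lands in `Fb`, and `Fb` is killed by `I` on the right and by everything on the
left; hence all products of three elements of `I` vanish. Strong nilpotence fails because of the
factor `z ∉ I`: since `(a·a)·z = b·z = a`, the element `a` reproduces itself, so
`(⋯((a·a)·z)·a)·z⋯)·a)·z = a ≠ 0` has arbitrarily many factors `a ∈ I`. -/

namespace ShAlg

variable {F : Type*}

@[ext]
theorem ext {x y : ShAlg F} (h : ∀ i, x.c i = y.c i) : x = y := by
  cases x; cases y; simpa using funext h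

theorem countIn_of_mem {I : Set (ShAlg F)} {x : ShAlg F} (hx : x ∈ I) :
    countIn I (FreeMagma.of x) = 1 := by
  rw [countIn, if_pos hx]

theorem countIn_of_notMem {I : Set (ShAlg F)} {x : ShAlg F} (hx : x ∉ I) :
    countIn I (FreeMagma.of x) = 0 := by
  rw [countIn, if_neg hx]

theorem countIn_mul (I : Set (ShAlg F)) (x y : FreeMagma (ShAlg F)) :
    countIn I (x * y) = countIn I x + countIn I y := rfl

variable [Field F]

@[simp] theorem zero_c : (0 : ShAlg F).c = 0 := rfl

@[simp] theorem add_c (x y : ShAlg F) : (x + y).c = x.c + y.c := rfl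

@[simp] theorem smul_c (t : F) (x : ShAlg F) : (t • x).c = t • x.c := rfl

@[simp] theorem mul_c (x y : ShAlg F) : (x * y).c = ![x.c 1 * y.c 2, x.c 0 * y.c 0, 0] := rfl

@[simp] theorem a_c : (a : ShAlg F).c = ![1, 0, 0] := rfl

@[simp] theorem b_c : (b : ShAlg F).c = ![0, 1, 0] := rfl

@[simp] theorem z_c : (z : ShAlg F).c = ![0, 0, 1] := rfl

theorem a_mul_a : (a : ShAlg F) * a = b := by ext i; fin_cases i <;> simp

theorem b_mul_z : (b : ShAlg F) * z = a := by ext i; fin_cases i <;> simp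

theorem a_mul_b : (a : ShAlg F) * b = 0 := by ext i; fin_cases i <;> simp

theorem b_mul_a : (b : ShAlg F) * a = 0 := by ext i; fin_cases i <;> simp

theorem a_mul_z : (a : ShAlg F) * z = 0 := by ext i; fin_cases i <;> simp

theorem z_mul_a : (z : ShAlg F) * a = 0 := by ext i; fin_cases i <;> simp

theorem z_mul_b : (z : ShAlg F) * b = 0 := by ext i; fin_cases i <;> simp

theorem b_mul_b : (b : ShAlg F) * b = 0 := by ext i; fin_cases i <;> simp

theorem z_mul_z : (z : ShAlg F) * z = 0 := by ext i; fin_cases i <;> simp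

theorem a_ne_zero : (a : ShAlg F) ≠ 0 := fun h => by simpa using congrArg (fun x => x.c 0) h

theorem b_ne_zero : (b : ShAlg F) ≠ 0 := fun h => by simpa using congrArg (fun x => x.c 1) h

theorem mul_c_two (x y : ShAlg F) : (x * y).c 2 = 0 := rfl

theorem mul_mul_eq_zero (u : ShAlg F) {v w : ShAlg F} (hv : v.c 2 = 0) (hw : w.c 2 = 0) :
    u * v * w = 0 := by
  ext i; fin_cases i <;> simp [hv, hw]

theorem mul_mul_eq_zero' (u v : ShAlg F) {w : ShAlg F} (hw : w.c 2 = 0) : u * (v * w) = 0 := by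
  ext i; fin_cases i <;> simp [hw]

theorem ev_of (x : ShAlg F) : ev (FreeMagma.of x) = x := rfl

theorem ev_mul (x y : FreeMagma (ShAlg F)) : ev (x * y) = ev x * ev y := rfl

noncomputable def azWord : ℕ → FreeMagma (ShAlg F)
  | 0 => FreeMagma.of a
  | n + 1 => azWord n * FreeMagma.of a * FreeMagma.of z

theorem ev_azWord (n : ℕ) : ev (azWord n : FreeMagma (ShAlg F)) = a := by
  induction n with
  | zero => rfl
  | succ n ih => rw [azWord, ev_mul, ev_mul, ih, ev_of, ev_of, a_mul_a, b_mul_z]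

theorem countIn_azWord (n : ℕ) :
    countIn {x : ShAlg F | x.c 2 = 0} (azWord n) = n + 1 := by
  have ha : (a : ShAlg F) ∈ {x : ShAlg F | x.c 2 = 0} := rfl
  have hz : (z : ShAlg F) ∉ {x : ShAlg F | x.c 2 = 0} := by simp
  induction n with
  | zero => exact countIn_of_mem ha
  | succ n ih => rw [azWord, countIn_mul, countIn_mul, ih, countIn_of_mem ha, countIn_of_notMem hz]

end ShAlg

open ShAlg in
/-- Shestakov's example: I = Fa + Fb is an ideal which is nilpotent as a
subalgebra (all products of three elements of I vanish) but is not strongly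
nilpotent as an ideal: there are nonzero bracketed products of elements of the
algebra with arbitrarily many factors in I; in particular b = ((a(bz))z)a ≠ 0. -/
theorem shestakov_example (F : Type*) [Field F] :
    -- the defining relations
    ((a : ShAlg F) * a = b ∧ (b : ShAlg F) * z = a ∧
      (a : ShAlg F) * b = 0 ∧ (b : ShAlg F) * a = 0 ∧ (a : ShAlg F) * z = 0 ∧
      (z : ShAlg F) * a = 0 ∧ (z : ShAlg F) * b = 0 ∧
      (b : ShAlg F) * b = 0 ∧ (z : ShAlg F) * z = 0) ∧
    -- I is an ideal
    (∀ u ∈ {x : ShAlg F | x.c 2 = 0}, ∀ v ∈ {x : ShAlg F | x.c 2 = 0},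
        u + v ∈ {x : ShAlg F | x.c 2 = 0}) ∧
    (∀ t : F, ∀ u ∈ {x : ShAlg F | x.c 2 = 0}, t • u ∈ {x : ShAlg F | x.c 2 = 0}) ∧
    (∀ x : ShAlg F, ∀ u ∈ {x : ShAlg F | x.c 2 = 0},
        x * u ∈ {x : ShAlg F | x.c 2 = 0} ∧ u * x ∈ {x : ShAlg F | x.c 2 = 0}) ∧
    -- I is nilpotent of class ≤ 3 as a subalgebra
    (∀ u ∈ {x : ShAlg F | x.c 2 = 0}, ∀ v ∈ {x : ShAlg F | x.c 2 = 0},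
      ∀ w ∈ {x : ShAlg F | x.c 2 = 0}, (u * v) * w = 0 ∧ u * (v * w) = 0) ∧
    -- but I is not strongly nilpotent as an ideal
    (∀ n : ℕ, ∃ w : FreeMagma (ShAlg F),
        n ≤ countIn {x : ShAlg F | x.c 2 = 0} w ∧ ev w ≠ 0) ∧
    (((((a : ShAlg F) * (b * z)) * z) * a = b) ∧ (b : ShAlg F) ≠ 0) := by
  refine ⟨⟨a_mul_a, b_mul_z, a_mul_b, b_mul_a, a_mul_z, z_mul_a, z_mul_b, b_mul_b, z_mul_z⟩,
    fun u (hu : u.c 2 = 0) v (hv : v.c 2 = 0) => show (u + v).c 2 = 0 by simp [hu, hv],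
    fun t u (hu : u.c 2 = 0) => show (t • u).c 2 = 0 by simp [hu],
    fun x u _ => ⟨mul_c_two x u, mul_c_two u x⟩,
    fun u _ v hv w hw => ⟨mul_mul_eq_zero u hv hw, mul_mul_eq_zero' u v hw⟩,
    fun n => ⟨azWord n, by rw [countIn_azWord]; omega, by rw [ev_azWord]; exact a_ne_zero⟩,
    by rw [b_mul_z, a_mul_a, b_mul_z, a_mul_a], b_ne_zero⟩
end
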